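/- arXiv:0710.2192 — 2 statements merged into one kernel-verified Lean document; each statement's English description precedes it below -/
import Mathlib

section
/- Let λ₀ ∈ (0,1] and Λ₀ > 0. Let A(t) be an n×n symmetric real matrix-valued function whose entries are Lipschitz continuous on ℝ, satisfying λ₀|ξ|² ≤ A(t)ξ·ξ ≤ λ₀⁻¹|ξ|² for every ξ ∈ ℝⁿ and t ∈ ℝ, and |A′(t)| ≤ Λ₀ for almost every t ∈ ℝ. Let √A(t) denote the (unique) positive square root of A(t). Then |d/dt √A(t)| ≤ 2^{3/2} λ₀^{−7/2} Λ₀ for almost every t ∈ ℝ. -/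
/-!
Let `B₁, B₂` be symmetric with `⟪B₁ x, x⟫ ≥ β ‖x‖²` and `⟪B₂ x, x⟫ ≥ α ‖x‖²`. Then
`S = B₁ - B₂` solves the Sylvester equation `S B₂ + B₁ S = B₁² - B₂²`, and testing it against an
eigenvector of `S` gives `‖S‖ ≤ ‖B₁² - B₂²‖ / (α + β)`. As `√A(t) ≥ √λ₀`, this makes `t ↦ √A(t)`
Lipschitz, hence differentiable almost everywhere by Rademacher's theorem. Differentiating
`B² = A` gives `B′ B + B B′ = A′` with `B′` symmetric, and the same eigenvector argument yields
`‖B′‖ ≤ Λ₀ / (2 √λ₀) ≤ 2^{3/2} λ₀^{-7/2} Λ₀`.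
-/

open MeasureTheory Real
open scoped BigOperators

noncomputable section

open Module.End
open scoped NNReal RealInnerProductSpace

section InnerProductSpace

open ContinuousLinearMap

variable {F : Type*} [NormedAddCommGroup F] [InnerProductSpace ℝ F]

theorem ContinuousLinearMap.abs_inner_self_le_norm_mul (T : F →L[ℝ] F) (x : F) :
    |⟪T x, x⟫| ≤ ‖T‖ * ‖x‖ ^ 2 := by
  calc |⟪T x, x⟫| ≤ ‖T x‖ * ‖x‖ := abs_real_inner_le_norm _ _
    _ ≤ ‖T‖ * ‖x‖ * ‖x‖ := by gcongr; exact T.le_opNorm x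
    _ = ‖T‖ * ‖x‖ ^ 2 := by ring

variable [FiniteDimensional ℝ F]

theorem IsSelfAdjoint.mul_norm_sq_le_inner_self {T : F →L[ℝ] F} (hT : IsSelfAdjoint T) {a : ℝ}
    (ha : ∀ μ, HasEigenvalue (T : F →ₗ[ℝ] F) μ → a ≤ μ) (x : F) : a * ‖x‖ ^ 2 ≤ ⟪T x, x⟫ := by
  rcases eq_or_ne x 0 with rfl | hx
  · simp
  have : Nontrivial F := ⟨⟨x, 0, hx⟩⟩
  have hbdd : BddBelow (Set.range fun y : {y : F // y ≠ 0} => ⟪T y, y⟫ / ‖(y : F)‖ ^ 2) := by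
    refine ⟨-‖T‖, ?_⟩
    rintro _ ⟨y, rfl⟩
    simpa [rayleighQuotient, reApplyInnerSelf_apply] using
      (abs_le.1 (T.rayleighQuotient_le_norm y)).1
  have hmin := ha _ hT.isSymmetric.hasEigenvalue_iInf_of_finiteDimensional
  simp only [RCLike.re_to_real] at hmin
  rw [← le_div_iff₀ (by positivity)]
  exact hmin.trans (ciInf_le hbdd ⟨x, hx⟩)

theorem IsSelfAdjoint.inner_self_le_mul_norm_sq {T : F →L[ℝ] F}
    (hT : IsSelfAdjoint T) {b : ℝ} (hb : ∀ μ, HasEigenvalue (T : F →ₗ[ℝ] F) μ → μ ≤ b) (x : F) :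
    ⟪T x, x⟫ ≤ b * ‖x‖ ^ 2 := by
  have h := hT.neg.mul_norm_sq_le_inner_self (a := -b) (fun μ hμ => by
    rw [toLinearMap_neg, hasEigenvalue_neg_iff] at hμ
    linarith [hb _ hμ]) x
  rw [neg_apply, inner_neg_left] at h
  linarith

theorem IsSelfAdjoint.norm_le_of_forall_hasEigenvalue {T : F →L[ℝ] F} (hT : IsSelfAdjoint T)
    {c : ℝ} (hc : 0 ≤ c) (h : ∀ μ, HasEigenvalue (T : F →ₗ[ℝ] F) μ → |μ| ≤ c) : ‖T‖ ≤ c := by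
  rw [T.norm_eq_iSup_rayleighQuotient hT.isSymmetric]
  refine ciSup_le fun x => ?_
  have hlo := hT.mul_norm_sq_le_inner_self (fun μ hμ => neg_le_of_abs_le (h μ hμ)) x
  have hhi := hT.inner_self_le_mul_norm_sq (fun μ hμ => le_of_abs_le (h μ hμ)) x
  simp only [rayleighQuotient, reApplyInnerSelf_apply, RCLike.re_to_real, abs_div, abs_pow,
    abs_norm]
  exact div_le_of_le_mul₀ (by positivity) hc (abs_le.2 ⟨by linarith, hhi⟩)

theorem IsSelfAdjoint.norm_le_norm_mul_add_mul_div {S P Q : F →L[ℝ] F} (hS : IsSelfAdjoint S)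
    {α β : ℝ} (hP : ∀ x, α * ‖x‖ ^ 2 ≤ ⟪P x, x⟫) (hQ : ∀ x, β * ‖x‖ ^ 2 ≤ ⟪Q x, x⟫)
    (hαβ : 0 < α + β) : ‖S‖ ≤ ‖S * P + Q * S‖ / (α + β) := by
  refine hS.norm_le_of_forall_hasEigenvalue (by positivity) fun μ hμ => ?_
  obtain ⟨w, hw⟩ := hμ.exists_hasEigenvector
  have hSw : S w = μ • w := hw.apply_eq_smul
  have hw0 : 0 < ‖w‖ ^ 2 := by have := hw.2; positivity
  have hquad : ⟪(S * P + Q * S) w, w⟫ = μ * (⟪P w, w⟫ + ⟪Q w, w⟫) := by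
    have hsymm : ∀ x y, ⟪S x, y⟫ = ⟪x, S y⟫ := hS.isSymmetric
    rw [add_apply, mul_apply_eq_comp, mul_apply_eq_comp, inner_add_left, hsymm, hSw, map_smul,
      real_inner_smul_right, real_inner_smul_left]
    ring
  have hsum : (α + β) * ‖w‖ ^ 2 ≤ ⟪P w, w⟫ + ⟪Q w, w⟫ := by linarith [hP w, hQ w]
  rw [le_div_iff₀ hαβ]
  refine le_of_mul_le_mul_right ?_ hw0
  calc |μ| * (α + β) * ‖w‖ ^ 2 ≤ |μ| * (⟪P w, w⟫ + ⟪Q w, w⟫) := by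
        rw [mul_assoc]; exact mul_le_mul_of_nonneg_left hsum (abs_nonneg μ)
    _ = |⟪(S * P + Q * S) w, w⟫| := by
        rw [hquad, abs_mul, abs_of_nonneg (le_trans (by positivity) hsum)]
    _ ≤ ‖S * P + Q * S‖ * ‖w‖ ^ 2 := abs_inner_self_le_norm_mul _ w

theorem ContinuousLinearMap.IsPositive.sqrt_mul_norm_sq_le_inner {B : F →L[ℝ] F}
    (hB : B.IsPositive) {a : ℝ} (ha : ∀ x, a * ‖x‖ ^ 2 ≤ ⟪(B * B) x, x⟫) (x : F) :
    √a * ‖x‖ ^ 2 ≤ ⟪B x, x⟫ := by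
  refine hB.isSelfAdjoint.mul_norm_sq_le_inner_self (fun μ hμ => ?_) x
  obtain ⟨w, hw⟩ := hμ.exists_hasEigenvector
  have hBw : B w = μ • w := hw.apply_eq_smul
  have hw0 : 0 < ‖w‖ ^ 2 := by have := hw.2; positivity
  have hμ0 : 0 ≤ μ := by
    have hpos := hB.inner_nonneg_left w
    rw [hBw, real_inner_smul_left, real_inner_self_eq_norm_sq] at hpos
    exact nonneg_of_mul_nonneg_left hpos hw0
  have hμa : a ≤ μ ^ 2 := by
    have haw := ha w
    rw [mul_apply_eq_comp, hBw, map_smul, hBw, smul_smul, real_inner_smul_left,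
      real_inner_self_eq_norm_sq] at haw
    nlinarith
  exact Real.sqrt_le_iff.2 ⟨hμ0, hμa⟩

theorem IsSelfAdjoint.norm_sub_le_norm_mul_self_sub_div {B₁ B₂ : F →L[ℝ] F}
    (h₁ : IsSelfAdjoint B₁) (h₂ : IsSelfAdjoint B₂) {α β : ℝ}
    (hα : ∀ x, α * ‖x‖ ^ 2 ≤ ⟪B₂ x, x⟫) (hβ : ∀ x, β * ‖x‖ ^ 2 ≤ ⟪B₁ x, x⟫) (hαβ : 0 < α + β) :
    ‖B₁ - B₂‖ ≤ ‖B₁ * B₁ - B₂ * B₂‖ / (α + β) := by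
  have h := (h₁.sub h₂).norm_le_norm_mul_add_mul_div hα hβ hαβ
  rwa [show (B₁ - B₂) * B₂ + B₁ * (B₁ - B₂) = B₁ * B₁ - B₂ * B₂ by noncomm_ring] at h

end InnerProductSpace

/-- The paper's `F′(t)`, taken entrywise; an entry is `0` where it is not differentiable. -/
def matrixDeriv {m n : Type*} (F : ℝ → Matrix m n ℝ) (t : ℝ) : Matrix m n ℝ :=
  Matrix.of fun i j => deriv (fun s => F s i j) t

theorem matrixDeriv_mul {l m n : Type*} [Fintype m] {F : ℝ → Matrix l m ℝ}
    {G : ℝ → Matrix m n ℝ} {t : ℝ} (hF : ∀ i j, DifferentiableAt ℝ (fun s => F s i j) t)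
    (hG : ∀ i j, DifferentiableAt ℝ (fun s => G s i j) t) :
    matrixDeriv (fun s => F s * G s) t = matrixDeriv F t * G t + F t * matrixDeriv G t := by
  ext i j
  simp only [matrixDeriv, Matrix.of_apply, Matrix.mul_apply, Matrix.add_apply,
    ← Finset.sum_add_distrib]
  exact (HasDerivAt.fun_sum fun k _ => (hF i k).hasDerivAt.mul (hG k j).hasDerivAt).deriv

theorem isHermitian_matrixDeriv {n : Type*} {F : ℝ → Matrix n n ℝ}
    (hF : ∀ s, (F s).IsHermitian) (t : ℝ) : (matrixDeriv F t).IsHermitian := by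
  ext i j
  simp only [matrixDeriv, Matrix.conjTranspose_apply, Matrix.of_apply, star_trivial]
  congr 1
  funext s
  simpa using (hF s).apply i j

namespace Matrix

variable {ι : Type*} [Fintype ι]

theorem norm_toLp_eq_sqrt_sum_sq (v : ι → ℝ) : ‖WithLp.toLp 2 v‖ = √(∑ i, v i ^ 2) := by
  rw [EuclideanSpace.norm_eq]
  simp [sq_abs]

theorem norm_toEuclideanCLM_toLp [DecidableEq ι] (M : Matrix ι ι ℝ) (v : ι → ℝ) :
    ‖toEuclideanCLM (𝕜 := ℝ) M (WithLp.toLp 2 v)‖ = √(∑ i, (∑ j, M i j * v j) ^ 2) := by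
  rw [toEuclideanCLM_toLp, norm_toLp_eq_sqrt_sum_sq]
  rfl

theorem norm_toEuclideanCLM_le_iff [DecidableEq ι] {M : Matrix ι ι ℝ} {c : ℝ} (hc : 0 ≤ c) :
    ‖toEuclideanCLM (𝕜 := ℝ) M‖ ≤ c ↔
      ∀ v : ι → ℝ, √(∑ i, (∑ j, M i j * v j) ^ 2) ≤ c * √(∑ i, v i ^ 2) := by
  refine ⟨fun h v => ?_, fun h => ContinuousLinearMap.opNorm_le_bound _ hc fun x => ?_⟩
  · rw [← norm_toEuclideanCLM_toLp, ← norm_toLp_eq_sqrt_sum_sq]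
    exact ((toEuclideanCLM (𝕜 := ℝ) M).le_opNorm _).trans (by gcongr)
  · have hx := h x.ofLp
    rwa [← norm_toEuclideanCLM_toLp, ← norm_toLp_eq_sqrt_sum_sq, WithLp.toLp_ofLp] at hx

theorem inner_toEuclideanCLM_self [DecidableEq ι] (M : Matrix ι ι ℝ) (x : EuclideanSpace ℝ ι) :
    ⟪toEuclideanCLM (𝕜 := ℝ) M x, x⟫ = ∑ i, ∑ j, M i j * x i * x j := by
  rw [real_inner_comm, inner_toEuclideanCLM]
  simp only [dotProduct, mulVec, Finset.mul_sum]
  refine Finset.sum_congr rfl fun i _ => Finset.sum_congr rfl fun j _ => ?_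
  ring

theorem abs_apply_le_norm_toEuclideanCLM [DecidableEq ι] (M : Matrix ι ι ℝ) (i j : ι) :
    |M i j| ≤ ‖toEuclideanCLM (𝕜 := ℝ) M‖ := by
  have h := (toEuclideanCLM (𝕜 := ℝ) M).le_opNorm (PiLp.single 2 j 1)
  rw [PiLp.norm_single, norm_one, mul_one] at h
  refine le_trans ?_ (le_trans (PiLp.norm_apply_le _ i) h)
  simp

theorem norm_toEuclideanCLM_le_sum_abs [DecidableEq ι] (M : Matrix ι ι ℝ) :
    ‖toEuclideanCLM (𝕜 := ℝ) M‖ ≤ ∑ i, ∑ j, |M i j| := by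
  have hsingle (i j : ι) (c : ℝ) : ‖toEuclideanCLM (𝕜 := ℝ) (single i j c)‖ ≤ |c| := by
    refine ContinuousLinearMap.opNorm_le_bound _ (abs_nonneg c) fun x => ?_
    rw [← WithLp.toLp_ofLp 2 x, toEuclideanCLM_toLp, single_mulVec_eq, WithLp.toLp_smul,
      norm_smul, PiLp.toLp_single, PiLp.norm_single, norm_one, mul_one, norm_mul,
      Real.norm_eq_abs, WithLp.toLp_ofLp]
    exact mul_le_mul_of_nonneg_left (PiLp.norm_apply_le _ j) (abs_nonneg c)
  conv_lhs => rw [matrix_eq_sum_single M]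
  simp only [map_sum]
  refine (norm_sum_le _ _).trans (Finset.sum_le_sum fun i _ => ?_)
  exact (norm_sum_le _ _).trans (Finset.sum_le_sum fun j _ => hsingle i j _)

theorem IsHermitian.isSelfAdjoint_toEuclideanCLM [DecidableEq ι] {M : Matrix ι ι ℝ}
    (hM : M.IsHermitian) : IsSelfAdjoint (toEuclideanCLM (𝕜 := ℝ) M) :=
  hM.isSelfAdjoint.map _

theorem PosSemidef.isPositive_toEuclideanCLM [DecidableEq ι] {M : Matrix ι ι ℝ}
    (hM : M.PosSemidef) : (toEuclideanCLM (𝕜 := ℝ) M).IsPositive := by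
  rwa [← ContinuousLinearMap.isPositive_toLinearMap_iff, coe_toEuclideanCLM_eq_toEuclideanLin,
    isPositive_toEuclideanLin_iff]

theorem lipschitzWith_apply_of_mul_self_eq [DecidableEq ι] {A B : ℝ → Matrix ι ι ℝ} {K : ℝ≥0}
    (hA : ∀ i j, LipschitzWith K fun t => A t i j) (hB : ∀ t, (B t).IsHermitian)
    (hBA : ∀ t, B t * B t = A t) {m : ℝ} (hm : 0 < m)
    (hcoer : ∀ t x, m * ‖x‖ ^ 2 ≤ ⟪toEuclideanCLM (𝕜 := ℝ) (B t) x, x⟫) (i j : ι) :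
    LipschitzWith (Real.toNNReal (Fintype.card ι ^ 2 * K / (2 * m))) fun t => B t i j := by
  refine LipschitzWith.of_dist_le_mul fun t s => ?_
  rw [Real.coe_toNNReal _ (by positivity), Real.dist_eq, Real.dist_eq]
  have hAentry (k l : ι) : |(A t - A s) k l| ≤ K * |t - s| := by
    simpa only [Real.dist_eq, sub_apply] using (hA k l).dist_le_mul t s
  calc |B t i j - B s i j| = |(B t - B s) i j| := rfl
    _ ≤ ‖toEuclideanCLM (𝕜 := ℝ) (B t - B s)‖ := abs_apply_le_norm_toEuclideanCLM _ i j
    _ ≤ ‖toEuclideanCLM (𝕜 := ℝ) (A t - A s)‖ / (m + m) := by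
        have h := (hB t).isSelfAdjoint_toEuclideanCLM.norm_sub_le_norm_mul_self_sub_div
          (hB s).isSelfAdjoint_toEuclideanCLM (hcoer s) (hcoer t) (by linarith)
        rwa [← map_mul, ← map_mul, ← map_sub, hBA, hBA, ← map_sub] at h
    _ ≤ (∑ _k : ι, ∑ _l : ι, K * |t - s|) / (m + m) := by
        gcongr
        exact (norm_toEuclideanCLM_le_sum_abs _).trans
          (Finset.sum_le_sum fun k _ => Finset.sum_le_sum fun l _ => hAentry k l)
    _ = Fintype.card ι ^ 2 * K / (2 * m) * |t - s| := by
        simp only [Finset.sum_const, Finset.card_univ, nsmul_eq_mul]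
        field_simp
        ring

theorem norm_toEuclideanCLM_matrixDeriv_le [DecidableEq ι] {B : ℝ → Matrix ι ι ℝ}
    (hB : ∀ t, (B t).IsHermitian) {m : ℝ} (hm : 0 < m) {t : ℝ}
    (hcoer : ∀ x, m * ‖x‖ ^ 2 ≤ ⟪toEuclideanCLM (𝕜 := ℝ) (B t) x, x⟫)
    (hdiff : ∀ i j, DifferentiableAt ℝ (fun s => B s i j) t) :
    ‖toEuclideanCLM (𝕜 := ℝ) (matrixDeriv B t)‖ ≤
      ‖toEuclideanCLM (𝕜 := ℝ) (matrixDeriv (fun s => B s * B s) t)‖ / (m + m) := by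
  have h := (isHermitian_matrixDeriv hB t).isSelfAdjoint_toEuclideanCLM
    |>.norm_le_norm_mul_add_mul_div hcoer hcoer (by linarith)
  rwa [← map_mul, ← map_mul, ← map_add, ← matrixDeriv_mul hdiff hdiff] at h

end Matrix

theorem inv_add_sqrt_le_rpow {x : ℝ} (h0 : 0 < x) (h1 : x ≤ 1) :
    (√x + √x)⁻¹ ≤ 2 ^ ((3 : ℝ) / 2) * x ^ (-(7 : ℝ) / 2) := by
  have hsqrt : (√x + √x)⁻¹ = 2⁻¹ * x ^ (-(1 : ℝ) / 2) := by
    rw [neg_div, Real.rpow_neg h0.le, Real.sqrt_eq_rpow, ← two_mul, mul_inv]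
  rw [hsqrt]
  refine mul_le_mul ?_ (Real.rpow_le_rpow_of_exponent_ge h0 h1 (by norm_num)) (by positivity)
    (by positivity)
  linarith [Real.one_le_rpow (x := 2) one_le_two (z := 3 / 2) (by norm_num)]

theorem stmt_12_general (n : ℕ) (lam0 Lam0 : ℝ)
    (hlam0 : lam0 ∈ Set.Ioc (0 : ℝ) 1) (hLam0 : 0 < Lam0)
    (A B : ℝ → Matrix (Fin n) (Fin n) ℝ)
    (hALip : ∃ K : NNReal, ∀ i j, LipschitzWith K (fun t => A t i j))
    (hell_lo : ∀ t (ξ : Fin n → ℝ),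
      lam0 * ∑ i, ξ i ^ 2 ≤ ∑ i, ∑ j, A t i j * ξ i * ξ j)
    (hA'bound : ∀ᵐ t ∂(volume : Measure ℝ), ∀ v : Fin n → ℝ,
      Real.sqrt (∑ i, (∑ j, deriv (fun s => A s i j) t * v j) ^ 2)
        ≤ Lam0 * Real.sqrt (∑ i, v i ^ 2))
    (hBsqrt : ∀ t, (B t).PosDef ∧ B t * B t = A t) :
    ∀ᵐ t ∂(volume : Measure ℝ),
      (∀ i j, DifferentiableAt ℝ (fun s => B s i j) t) ∧
      ∀ v : Fin n → ℝ,
        Real.sqrt (∑ i, (∑ j, deriv (fun s => B s i j) t * v j) ^ 2)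
          ≤ 2 ^ ((3 : ℝ) / 2) * lam0 ^ (-(7 : ℝ) / 2) * Lam0 *
              Real.sqrt (∑ i, v i ^ 2) := by
  obtain ⟨hlam, hlam1⟩ := hlam0
  obtain ⟨K, hK⟩ := hALip
  have hBherm (t : ℝ) : (B t).IsHermitian := (hBsqrt t).1.isHermitian
  have hcoer (t : ℝ) (x : EuclideanSpace ℝ (Fin n)) :
      √lam0 * ‖x‖ ^ 2 ≤ ⟪Matrix.toEuclideanCLM (𝕜 := ℝ) (B t) x, x⟫ := by
    refine (hBsqrt t).1.posSemidef.isPositive_toEuclideanCLM.sqrt_mul_norm_sq_le_inner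
      (fun y => ?_) x
    rw [← map_mul, (hBsqrt t).2, Matrix.inner_toEuclideanCLM_self,
      EuclideanSpace.real_norm_sq_eq]
    exact hell_lo t y
  have hdiff : ∀ᵐ t, ∀ i j, DifferentiableAt ℝ (fun s => B s i j) t := by
    simp only [ae_all_iff]
    exact fun i j => (Matrix.lipschitzWith_apply_of_mul_self_eq hK hBherm (fun t => (hBsqrt t).2)
      (Real.sqrt_pos.2 hlam) hcoer i j).ae_differentiableAt
  filter_upwards [hA'bound, hdiff] with t hA't hdt
  have hA' := (Matrix.norm_toEuclideanCLM_le_iff (M := matrixDeriv A t) hLam0.le).2 hA't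
  refine ⟨hdt, (Matrix.norm_toEuclideanCLM_le_iff (M := matrixDeriv B t) (by positivity)).1 ?_⟩
  calc ‖Matrix.toEuclideanCLM (𝕜 := ℝ) (matrixDeriv B t)‖
      ≤ ‖Matrix.toEuclideanCLM (𝕜 := ℝ) (matrixDeriv A t)‖ / (√lam0 + √lam0) := by
        simpa only [(hBsqrt _).2] using
          Matrix.norm_toEuclideanCLM_matrixDeriv_le hBherm (Real.sqrt_pos.2 hlam) (hcoer t) hdt
    _ ≤ (√lam0 + √lam0)⁻¹ * Lam0 := by rw [div_eq_inv_mul]; gcongr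
    _ ≤ 2 ^ ((3 : ℝ) / 2) * lam0 ^ (-(7 : ℝ) / 2) * Lam0 := by
        gcongr
        exact inv_add_sqrt_le_rpow hlam hlam1

/-- Let `A(t)` be a symmetric matrix-valued function with Lipschitz
entries, satisfying `λ₀|ξ|² ≤ A(t)ξ·ξ ≤ λ₀⁻¹|ξ|²` and `|A′(t)| ≤ Λ₀` a.e. (in operator
norm, expressed through the action on vectors).  If `B(t)` is the positive square root
of `A(t)`, then a.e. `B` is differentiable and `|d/dt B(t)| ≤ 2^{3/2} λ₀^{−7/2} Λ₀`
(again in the `ℓ² → ℓ²` operator norm, expressed through the action on vectors). -/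
theorem stmt_12 (n : ℕ) (lam0 Lam0 : ℝ)
    (hlam0 : lam0 ∈ Set.Ioc (0 : ℝ) 1) (hLam0 : 0 < Lam0)
    (A B : ℝ → Matrix (Fin n) (Fin n) ℝ)
    (hAsym : ∀ t, (A t).IsSymm)
    (hALip : ∃ K : NNReal, ∀ i j, LipschitzWith K (fun t => A t i j))
    (hell_lo : ∀ t (ξ : Fin n → ℝ),
      lam0 * ∑ i, ξ i ^ 2 ≤ ∑ i, ∑ j, A t i j * ξ i * ξ j)
    (hell_hi : ∀ t (ξ : Fin n → ℝ),
      ∑ i, ∑ j, A t i j * ξ i * ξ j ≤ lam0⁻¹ * ∑ i, ξ i ^ 2)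
    (hA'bound : ∀ᵐ t ∂(volume : Measure ℝ), ∀ v : Fin n → ℝ,
      Real.sqrt (∑ i, (∑ j, deriv (fun s => A s i j) t * v j) ^ 2)
        ≤ Lam0 * Real.sqrt (∑ i, v i ^ 2))
    (hBsqrt : ∀ t, (B t).PosDef ∧ B t * B t = A t) :
    ∀ᵐ t ∂(volume : Measure ℝ),
      (∀ i j, DifferentiableAt ℝ (fun s => B s i j) t) ∧
      ∀ v : Fin n → ℝ,
        Real.sqrt (∑ i, (∑ j, deriv (fun s => B s i j) t * v j) ^ 2)
          ≤ 2 ^ ((3 : ℝ) / 2) * lam0 ^ (-(7 : ℝ) / 2) * Lam0 *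
              Real.sqrt (∑ i, v i ^ 2) :=
  stmt_12_general n lam0 Lam0 hlam0 hLam0 A B hALip hell_lo hA'bound hBsqrt
end
end

section
/- Let {Ω₁(t)}_{t∈ℝ} and {Ω₂(t)}_{t∈ℝ} be two families of bounded domains in ℝⁿ satisfying |Ω_i(t)| ≤ M R₀ⁿ for t ∈ [0,T], i = 1,2, and such that for each i the boundary portion ∪_{t∈[0,T]} ∂Ω_i(t)×{t} of the lateral boundary of ∪_{t∈ℝ} Ω_i(t)×{t} is of class C^{2,β} with constants R₀, E. Then for every t, τ ∈ [0,T]: | d_H( cl Ω₁(t), cl Ω₂(t) ) − d_H( cl Ω₁(τ), cl Ω₂(τ) ) | ≤ C |t−τ| / R₀, where C depends only on E, M and β. -/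
open MeasureTheory Real
open scoped BigOperators ENNReal

noncomputable section

/-- Spatial partial derivative in the direction `i`. -/
def pder {n : ℕ} (i : Fin n) (f : EuclideanSpace ℝ (Fin n) → ℝ)
    (x : EuclideanSpace ℝ (Fin n)) : ℝ :=
  fderiv ℝ f x (EuclideanSpace.single i 1)

/-- The first `m+1` coordinates `x′` of a point `x ∈ ℝ^{m+2}`. -/
def headCoords {m : ℕ} (x : EuclideanSpace ℝ (Fin (m + 2))) :
    EuclideanSpace ℝ (Fin (m + 1)) :=
  (EuclideanSpace.equiv (Fin (m + 1)) ℝ).symm (fun i => x i.castSucc)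

/-- The last coordinate `x_n` of a point `x ∈ ℝ^{m+2}`. -/
def lastCoord {m : ℕ} (x : EuclideanSpace ℝ (Fin (m + 2))) : ℝ := x (Fin.last (m + 1))

/-- Quantitative parabolic `C^{2,β}` bounds (with constants `R₀`, `Ebd`) for a local
graph function `φ = φ(x′,t)` normalized at the origin. -/
structure GraphC2β (m : ℕ) (β R₀ Ebd : ℝ)
    (φ : EuclideanSpace ℝ (Fin (m + 1)) → ℝ → ℝ) : Prop where
  val0 : φ 0 0 = 0
  grad0 : gradient (fun y => φ y 0) 0 = 0
  smooth : ContDiffOn ℝ 2 (fun p : EuclideanSpace ℝ (Fin (m + 1)) × ℝ => φ p.1 p.2)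
    (Metric.ball 0 R₀ ×ˢ Set.Ioo (-(R₀ ^ 2)) (R₀ ^ 2))
  bound : ∀ y ∈ Metric.ball (0 : EuclideanSpace ℝ (Fin (m + 1))) R₀,
    ∀ t ∈ Set.Ioo (-(R₀ ^ 2)) (R₀ ^ 2),
    |φ y t| + R₀ * ‖gradient (fun z => φ z t) y‖ +
      R₀ ^ 2 * ‖fderiv ℝ (fun z => gradient (fun w => φ w t) z) y‖ +
      R₀ ^ 2 * |deriv (φ y) t| ≤ Ebd * R₀
  holder : ∀ y ∈ Metric.ball (0 : EuclideanSpace ℝ (Fin (m + 1))) R₀,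
    ∀ t ∈ Set.Ioo (-(R₀ ^ 2)) (R₀ ^ 2),
    ∀ y' ∈ Metric.ball (0 : EuclideanSpace ℝ (Fin (m + 1))) R₀,
    ∀ t' ∈ Set.Ioo (-(R₀ ^ 2)) (R₀ ^ 2),
    ‖fderiv ℝ (fun z => gradient (fun w => φ w t) z) y -
        fderiv ℝ (fun z => gradient (fun w => φ w t') z) y'‖ ≤
      Ebd * R₀ ^ (-(1 + β)) * (‖y - y'‖ ^ 2 + |t - t'|) ^ (β / 2)

/-- A space-time portion `Γ` of the lateral boundary of the family
`t ↦ Ω(t)` is of class `C^{2,β}` with constants `R₀`, `Ebd`:  near each of its points,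
after a rigid change of space coordinates, `Ω(t)` is the epigraph of a `C^{2,β}`
function `φ`. -/
def BoundaryC2β (m : ℕ) (β R₀ Ebd : ℝ)
    (Ω : ℝ → Set (EuclideanSpace ℝ (Fin (m + 2))))
    (Γ : Set (EuclideanSpace ℝ (Fin (m + 2)) × ℝ)) : Prop :=
  ∀ p ∈ Γ, ∃ σ : EuclideanSpace ℝ (Fin (m + 2)) ≃ᵃⁱ[ℝ] EuclideanSpace ℝ (Fin (m + 2)),
    ∃ φ : EuclideanSpace ℝ (Fin (m + 1)) → ℝ → ℝ,
      σ p.1 = 0 ∧ GraphC2β m β R₀ Ebd φ ∧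
      ∀ (x : EuclideanSpace ℝ (Fin (m + 2))) (t : ℝ),
        ‖headCoords (σ x)‖ < R₀ → |lastCoord (σ x)| < R₀ → |t - p.2| < R₀ ^ 2 →
        (x ∈ Ω t ↔ φ (headCoords (σ x)) (t - p.2) < lastCoord (σ x))

/-- Interior of `S` relative to `F`. -/
def relInt {X : Type*} [TopologicalSpace X] (F S : Set X) : Set X :=
  {x ∈ S | ∃ U : Set X, IsOpen U ∧ x ∈ U ∧ U ∩ F ⊆ S}

/-- Boundary of `S` relative to `F`. -/
def relBd {X : Type*} [TopologicalSpace X] (F S : Set X) : Set X :=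
  {x ∈ F | ∀ U : Set X, IsOpen U → x ∈ U →
    (U ∩ S).Nonempty ∧ (U ∩ (F \ S)).Nonempty}

/-- The a priori geometric assumptions on an admissible family of domains
`{Ω(t)}` with accessible boundary part `A`, unknown parts `I(t)`, and distinguished
portions `Σ ⊆ Σ̃ ⊆ A` around a point `P₀`. -/
structure AdmissibleFamily (m : ℕ) (β R₀ Ebd M T : ℝ)
    (Ω : ℝ → Set (EuclideanSpace ℝ (Fin (m + 2))))
    (A : Set (EuclideanSpace ℝ (Fin (m + 2))))
    (I : ℝ → Set (EuclideanSpace ℝ (Fin (m + 2))))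
    (Sig SigT : Set (EuclideanSpace ℝ (Fin (m + 2))))
    (P₀ : EuclideanSpace ℝ (Fin (m + 2))) : Prop where
  isOpen : ∀ t, IsOpen (Ω t)
  isBounded : ∀ t, Bornology.IsBounded (Ω t)
  isConnected : ∀ t, IsConnected (Ω t)
  measBound : ∀ t ∈ Set.Icc (0 : ℝ) T, volume (Ω t) ≤ ENNReal.ofReal (M * R₀ ^ (m + 2))
  lateralC2 : BoundaryC2β m β R₀ Ebd Ω
    {p | p.2 ∈ Set.Icc (0 : ℝ) T ∧ p.1 ∈ frontier (Ω p.2)}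
  decomp : ∀ t ∈ Set.Icc (0 : ℝ) T, A ∪ I t = frontier (Ω t)
  Anonempty : A.Nonempty
  Inonempty : ∀ t ∈ Set.Icc (0 : ℝ) T, (I t).Nonempty
  intDisjoint : ∀ t ∈ Set.Icc (0 : ℝ) T,
    relInt (frontier (Ω t)) A ∩ relInt (frontier (Ω t)) (I t) = ∅
  bdA : ∀ t ∈ Set.Icc (0 : ℝ) T, A ∩ I t = relBd (frontier (Ω t)) A
  bdI : ∀ t ∈ Set.Icc (0 : ℝ) T, A ∩ I t = relBd (frontier (Ω t)) (I t)
  accC2 : BoundaryC2β m β R₀ Ebd Ω {p | p.2 ∈ Set.Icc (0 : ℝ) T ∧ p.1 ∈ A}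
  unknC2 : BoundaryC2β m β R₀ Ebd Ω {p | p.2 ∈ Set.Icc (0 : ℝ) T ∧ p.1 ∈ I p.2}
  SigSub : Sig ⊆ SigT
  SigTSub : SigT ⊆ A
  P0mem : P₀ ∈ Sig
  SigCover : ∀ t ∈ Set.Icc (0 : ℝ) T, frontier (Ω t) ∩ Metric.ball P₀ R₀ ⊆ Sig
  SigTFar : ∀ t ∈ Set.Icc (0 : ℝ) T, ∀ x ∈ SigT, R₀ ≤ Metric.infDist x (I t)

/-- The assumptions on the thermal conductivity tensor `κ = κ(x,t,z)`. -/
structure Conductivity (m : ℕ) (R₀ lam Lam : ℝ)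
    (κ : EuclideanSpace ℝ (Fin (m + 2)) → ℝ → ℝ → Fin (m + 2) → Fin (m + 2) → ℝ) :
    Prop where
  symm : ∀ x t z i j, κ x t z i j = κ x t z j i
  ellip_lo : ∀ x t z (ξ : Fin (m + 2) → ℝ),
    lam * ∑ i, ξ i ^ 2 ≤ ∑ i, ∑ j, κ x t z i j * ξ i * ξ j
  ellip_hi : ∀ x t z (ξ : Fin (m + 2) → ℝ),
    ∑ i, ∑ j, κ x t z i j * ξ i * ξ j ≤ lam⁻¹ * ∑ i, ξ i ^ 2
  derivBound : ∃ N₁ N₂ N₃ : ℝ,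
    (∀ x t z i j, ‖gradient (fun y => κ y t z i j) x‖ ≤ N₁) ∧
    (∀ x t z i j, |deriv (fun s => κ x s z i j) t| ≤ N₂) ∧
    (∀ x t z i j, |deriv (deriv (fun w => κ x t w i j)) z| ≤ N₃) ∧
    R₀ * N₁ + R₀ ^ 2 * N₂ + N₃ ≤ Lam

/-- The assumptions on the initial datum `u₀` and the boundary datum `f`. -/
structure DataAssumptions (m : ℕ) (R₀ F₀ T : ℝ) (F₁ : ℝ → ℝ)
    (Ω0 I0 A SigT : Set (EuclideanSpace ℝ (Fin (m + 2))))
    (u₀ : EuclideanSpace ℝ (Fin (m + 2)) → ℝ)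
    (f : EuclideanSpace ℝ (Fin (m + 2)) → ℝ → ℝ) : Prop where
  u0_smooth : ContDiffOn ℝ 2 u₀ (closure Ω0)
  u0_vanish : ∀ x ∈ I0, u₀ x = 0
  u0_bound : ∀ x ∈ closure Ω0,
    |u₀ x| + R₀ * ‖gradient u₀ x‖ + R₀ ^ 2 * ‖fderiv ℝ (gradient u₀) x‖ ≤ F₀
  f_smooth : ContDiffOn ℝ 2 (fun p : EuclideanSpace ℝ (Fin (m + 2)) × ℝ => f p.1 p.2)
    (A ×ˢ Set.Icc (0 : ℝ) T)
  f_init : ∀ x ∈ A, f x 0 = u₀ x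
  f_supp : ∀ t ∈ Set.Icc (0 : ℝ) T, ∀ x ∈ A \ SigT, f x t = 0
  f_bound : ∀ x ∈ A, ∀ t ∈ Set.Icc (0 : ℝ) T, |f x t| ≤ F₀
  f_lower : ∀ t ∈ Set.Icc (0 : ℝ) T, F₁ t ≤ sSup ((fun x => |f x t|) '' A)

/-- `u` is a (regular) solution of the Cauchy–Dirichlet problem
`div(κ(x,t,u)∇u) − ∂ₜu = 0` in `∪ₜ Ω(t)×{t}`, `u = f` on `A×(0,T]`,
`u = 0` on the unknown lateral boundary, `u(·,0) = u₀`. -/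
structure SolvesIBVP (m : ℕ) (T : ℝ)
    (κ : EuclideanSpace ℝ (Fin (m + 2)) → ℝ → ℝ → Fin (m + 2) → Fin (m + 2) → ℝ)
    (Ω : ℝ → Set (EuclideanSpace ℝ (Fin (m + 2))))
    (A : Set (EuclideanSpace ℝ (Fin (m + 2))))
    (I : ℝ → Set (EuclideanSpace ℝ (Fin (m + 2))))
    (u₀ : EuclideanSpace ℝ (Fin (m + 2)) → ℝ)
    (f u : EuclideanSpace ℝ (Fin (m + 2)) → ℝ → ℝ) : Prop where
  pde : ∀ t ∈ Set.Ioo (0 : ℝ) T, ∀ x ∈ Ω t,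
    (∑ i, pder i (fun y => ∑ j, κ y t (u y t) i j *
        pder j (fun z => u z t) y) x) = deriv (u x) t
  bcA : ∀ t ∈ Set.Ioc (0 : ℝ) T, ∀ x ∈ A, u x t = f x t
  bcI : ∀ t ∈ Set.Ioc (0 : ℝ) T, ∀ x ∈ I t, u x t = 0
  init : ∀ x ∈ closure (Ω 0), u x 0 = u₀ x
  reg : ContinuousOn (fun p : EuclideanSpace ℝ (Fin (m + 2)) × ℝ => u p.1 p.2)
    {p | p.2 ∈ Set.Icc (0 : ℝ) T ∧ p.1 ∈ closure (Ω p.2)}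

/-- `ν` is an exterior unit normal direction to `Ω` at the boundary point `x`. -/
def IsOuterNormal {n : ℕ} (Ω : Set (EuclideanSpace ℝ (Fin n)))
    (x ν : EuclideanSpace ℝ (Fin n)) : Prop :=
  ‖ν‖ = 1 ∧ ∃ ε > 0, (∀ s ∈ Set.Ioo (0 : ℝ) ε, x + s • ν ∉ closure Ω) ∧
    (∀ s ∈ Set.Ioo (0 : ℝ) ε, x - s • ν ∈ Ω)

/-- The heat flux `κ(x,t,u)∇u · ν` through the boundary. -/
def fluxBdry (m : ℕ)
    (κ : EuclideanSpace ℝ (Fin (m + 2)) → ℝ → ℝ → Fin (m + 2) → Fin (m + 2) → ℝ)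
    (u : EuclideanSpace ℝ (Fin (m + 2)) → ℝ → ℝ)
    (ν : EuclideanSpace ℝ (Fin (m + 2)) → ℝ → EuclideanSpace ℝ (Fin (m + 2)))
    (x : EuclideanSpace ℝ (Fin (m + 2))) (t : ℝ) : ℝ :=
  ∑ i, (∑ j, κ x t (u x t) i j * pder j (fun z => u z t) x) * ν x t i

open Metric Set Topology

/-! The bound `|∂ₜφ| ≤ E/R₀` on the local graphs controls how fast the boundary moves. Near a
boundary point of `Ω(s)`, `Ω(t)` lies above the graph of `φ(·, t - s)`, which is within
`(E/R₀)|t - s|` of the graph of `φ(·, 0)` bounding `Ω(s)`; hence every point of `Ω(t)` within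
`R₀/2` of `cl Ω(s)` is within `(E/R₀)|t - s|` of it. Since `Ω(t)` is connected and meets `Ω(s)`,
the distance to `cl Ω(s)` cannot jump over the gap `((E/R₀)|t - s|, R₀/2)` on `Ω(t)`, so the
estimate holds on all of `Ω(t)`. Thus `t ↦ cl Ω(t)` is locally `E/R₀`-Lipschitz for `d_H`, hence
`E/R₀`-Lipschitz on `[0, T]`, and the triangle inequality for `d_H` gives the theorem with
`C = 2E`. -/

theorem IsPreconnected.forall_le_of_forall_lt_imp_le {X α : Type*} [TopologicalSpace X]
    [LinearOrder α] [TopologicalSpace α] [OrderClosedTopology α] [DenselyOrdered α]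
    {S : Set X} (hS : IsPreconnected S) {f : X → α} (hf : ContinuousOn f S) {a b : α}
    (hab : a < b) (hgap : ∀ x ∈ S, f x < b → f x ≤ a) {x₀ : X} (hx₀ : x₀ ∈ S)
    (hfx₀ : f x₀ ≤ a) : ∀ x ∈ S, f x ≤ a := by
  intro x hx
  by_contra! hax
  obtain ⟨v, hav, hvb⟩ := exists_between hab
  obtain ⟨y, hy, hyv⟩ : min (f x) v ∈ f '' S :=
    hS.intermediate_value hx₀ hx hf ⟨hfx₀.trans (le_min hax.le hav.le), min_le_left _ _⟩
  have hlt : a < f y := hyv ▸ lt_min hax hav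
  exact hlt.not_ge (hgap y hy (hyv ▸ (min_le_right _ _).trans_lt hvb))

theorem exists_mem_frontier_infDist_closure_eq_dist {E : Type*} [NormedAddCommGroup E]
    [NormedSpace ℝ E] [FiniteDimensional ℝ E] {U : Set E} (hU : U.Nonempty) {x : E}
    (hx : x ∉ closure U) : ∃ z ∈ frontier U, infDist x (closure U) = dist x z := by
  obtain ⟨z, hz, hdist⟩ := exists_mem_frontier_infDist_compl_eq_dist (s := (closure U)ᶜ) hx
    (compl_ne_univ.2 hU.closure)
  rw [frontier_compl] at hz
  rw [compl_compl] at hdist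
  exact ⟨z, frontier_closure_subset hz, hdist⟩

theorem abs_hausdorffDist_sub_hausdorffDist_le {α : Type*} [MetricSpace α] {A A' B B' : Set α}
    (hA : A.Nonempty) (hA' : A'.Nonempty) (hB : B.Nonempty) (hB' : B'.Nonempty)
    (bA : Bornology.IsBounded A) (bA' : Bornology.IsBounded A')
    (bB : Bornology.IsBounded B) (bB' : Bornology.IsBounded B') :
    |hausdorffDist A B - hausdorffDist A' B'| ≤ hausdorffDist A A' + hausdorffDist B B' := by
  have hfin {X Y : Set α} (hX : X.Nonempty) (hY : Y.Nonempty) (bX : Bornology.IsBounded X)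
      (bY : Bornology.IsBounded Y) : hausdorffEDist X Y ≠ ⊤ :=
    hausdorffEDist_ne_top_of_nonempty_of_bounded hX hY bX bY
  have h₁ := hausdorffDist_triangle (u := B) (hfin hA hA' bA bA')
  have h₂ := hausdorffDist_triangle (u := B) (hfin hA' hB' bA' bB')
  have h₃ := hausdorffDist_triangle (u := B') (hfin hA' hA bA' bA)
  have h₄ := hausdorffDist_triangle (u := B') (hfin hA hB bA bB)
  rw [hausdorffDist_comm (s := B') (t := B)] at h₂
  rw [hausdorffDist_comm (s := A') (t := A)] at h₃
  rw [abs_sub_le_iff]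
  constructor <;> linarith

theorem Set.OrdConnected.abs_sub_le_mul_of_local {s : Set ℝ} (hs : s.OrdConnected) {f : ℝ → ℝ}
    {K δ : ℝ} (hδ : 0 < δ)
    (hloc : ∀ a ∈ s, ∀ b ∈ s, |b - a| ≤ δ → |f b - f a| ≤ K * |b - a|) :
    ∀ a ∈ s, ∀ b ∈ s, |f b - f a| ≤ K * |b - a| := by
  have chain : ∀ n : ℕ, ∀ a ∈ s, ∀ b ∈ s, a ≤ b → b - a ≤ n * δ →
      |f b - f a| ≤ K * (b - a) := by
    intro n
    induction n with
    | zero =>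
      intro a _ b _ hab hba
      obtain rfl : b = a := by push_cast at hba; linarith
      simp
    | succ n ih =>
      intro a ha b hb hab hba
      by_cases hshort : b - a ≤ δ
      · rw [← abs_of_nonneg (sub_nonneg.2 hab)] at hshort ⊢
        exact hloc a ha b hb hshort
      have hc : a + δ ∈ s := hs.out ha hb ⟨by linarith, by linarith⟩
      have h₁ := hloc a ha (a + δ) hc (by rw [add_sub_cancel_left, abs_of_pos hδ])
      have h₂ := ih (a + δ) hc b hb (by linarith) (by push_cast at hba; linarith)
      rw [add_sub_cancel_left, abs_of_pos hδ] at h₁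
      calc |f b - f a| ≤ |f b - f (a + δ)| + |f (a + δ) - f a| := abs_sub_le _ _ _
        _ ≤ K * (b - (a + δ)) + K * δ := add_le_add h₂ h₁
        _ = K * (b - a) := by ring
  intro a ha b hb
  wlog hab : a ≤ b generalizing a b
  · rw [abs_sub_comm, abs_sub_comm b]
    exact this b hb a ha (le_of_not_ge hab)
  obtain ⟨n, hn⟩ := exists_nat_ge ((b - a) / δ)
  rw [abs_of_nonneg (sub_nonneg.2 hab)]
  exact chain n a ha b hb hab ((div_le_iff₀ hδ).1 hn)

section Coordinates

variable {m : ℕ}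

def ofHeadLast (y : EuclideanSpace ℝ (Fin (m + 1))) (c : ℝ) : EuclideanSpace ℝ (Fin (m + 2)) :=
  (EuclideanSpace.equiv (Fin (m + 2)) ℝ).symm (Fin.snoc (fun i => y i) c)

@[simp]
theorem ofHeadLast_castSucc (y : EuclideanSpace ℝ (Fin (m + 1))) (c : ℝ) (i : Fin (m + 1)) :
    ofHeadLast y c i.castSucc = y i :=
  Fin.snoc_castSucc (α := fun _ => ℝ) _ _ _

@[simp]
theorem ofHeadLast_last (y : EuclideanSpace ℝ (Fin (m + 1))) (c : ℝ) :
    ofHeadLast y c (Fin.last (m + 1)) = c :=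
  Fin.snoc_last (α := fun _ => ℝ) _ _

@[simp]
theorem headCoords_ofHeadLast (y : EuclideanSpace ℝ (Fin (m + 1))) (c : ℝ) :
    headCoords (ofHeadLast y c) = y := by
  ext i
  exact ofHeadLast_castSucc y c i

@[simp]
theorem lastCoord_ofHeadLast (y : EuclideanSpace ℝ (Fin (m + 1))) (c : ℝ) :
    lastCoord (ofHeadLast y c) = c :=
  ofHeadLast_last y c

@[simp]
theorem ofHeadLast_headCoords_lastCoord (x : EuclideanSpace ℝ (Fin (m + 2))) :
    ofHeadLast (headCoords x) (lastCoord x) = x := by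
  ext i
  induction i using Fin.lastCases with
  | last => exact ofHeadLast_last _ _
  | cast i => exact ofHeadLast_castSucc _ _ i

theorem norm_sq_eq_norm_headCoords_sq_add_lastCoord_sq (x : EuclideanSpace ℝ (Fin (m + 2))) :
    ‖x‖ ^ 2 = ‖headCoords x‖ ^ 2 + lastCoord x ^ 2 := by
  simp only [EuclideanSpace.real_norm_sq_eq, Fin.sum_univ_castSucc (n := m + 1)]
  rfl

theorem norm_headCoords_le (x : EuclideanSpace ℝ (Fin (m + 2))) : ‖headCoords x‖ ≤ ‖x‖ :=
  (sq_le_sq₀ (norm_nonneg _) (norm_nonneg _)).1 <| by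
    rw [norm_sq_eq_norm_headCoords_sq_add_lastCoord_sq x]; nlinarith [sq_nonneg (lastCoord x)]

theorem abs_lastCoord_le (x : EuclideanSpace ℝ (Fin (m + 2))) : |lastCoord x| ≤ ‖x‖ :=
  (sq_le_sq₀ (abs_nonneg _) (norm_nonneg _)).1 <| by
    rw [sq_abs, norm_sq_eq_norm_headCoords_sq_add_lastCoord_sq x]
    nlinarith [sq_nonneg ‖headCoords x‖]

theorem isometry_ofHeadLast (y : EuclideanSpace ℝ (Fin (m + 1))) : Isometry (ofHeadLast y) := by
  refine Isometry.of_dist_eq fun c c' => ?_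
  simp [EuclideanSpace.dist_eq, Fin.sum_univ_castSucc (n := m + 1), Real.sqrt_sq_eq_abs,
    Real.dist_eq]

end Coordinates

namespace GraphC2β

variable {m : ℕ} {β R₀ Ebd : ℝ} {φ : EuclideanSpace ℝ (Fin (m + 1)) → ℝ → ℝ}
  {y : EuclideanSpace ℝ (Fin (m + 1))}

theorem differentiableAt_time (hφ : GraphC2β m β R₀ Ebd φ) (hy : y ∈ ball 0 R₀) {t : ℝ}
    (ht : t ∈ Ioo (-(R₀ ^ 2)) (R₀ ^ 2)) : DifferentiableAt ℝ (φ y) t := by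
  have hjoint : ContDiffAt ℝ 2 (fun p : EuclideanSpace ℝ (Fin (m + 1)) × ℝ => φ p.1 p.2)
      (y, t) := hφ.smooth.contDiffAt ((isOpen_ball.prod isOpen_Ioo).mem_nhds ⟨hy, ht⟩)
  exact (hjoint.differentiableAt two_ne_zero).comp (f := fun s : ℝ => (y, s)) t
    ((differentiableAt_const y).prodMk differentiableAt_id)

theorem abs_deriv_time_le (hφ : GraphC2β m β R₀ Ebd φ) (hy : y ∈ ball 0 R₀) {t : ℝ}
    (ht : t ∈ Ioo (-(R₀ ^ 2)) (R₀ ^ 2)) : |deriv (φ y) t| ≤ Ebd / R₀ := by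
  have hR : 0 < R₀ := (norm_nonneg y).trans_lt (mem_ball_zero_iff.1 hy)
  have hbound := hφ.bound y hy t ht
  rw [le_div_iff₀ hR]
  nlinarith [abs_nonneg (φ y t), norm_nonneg (gradient (fun z => φ z t) y),
    norm_nonneg (fderiv ℝ (fun z => gradient (fun w => φ w t) z) y)]

theorem abs_sub_le (hφ : GraphC2β m β R₀ Ebd φ) (hy : y ∈ ball 0 R₀) {a b : ℝ}
    (ha : a ∈ Ioo (-(R₀ ^ 2)) (R₀ ^ 2)) (hb : b ∈ Ioo (-(R₀ ^ 2)) (R₀ ^ 2)) :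
    |φ y b - φ y a| ≤ Ebd / R₀ * |b - a| :=
  (convex_Ioo _ _).norm_image_sub_le_of_norm_deriv_le
    (fun _ ht => hφ.differentiableAt_time hy ht) (fun _ ht => hφ.abs_deriv_time_le hy ht) ha hb

end GraphC2β

/-- `BoundaryC2β` asks for exactly this at each `p ∈ Γ`, with `s = p.2`. -/
def IsGraphChart (m : ℕ) (R₀ : ℝ) (Ω : ℝ → Set (EuclideanSpace ℝ (Fin (m + 2)))) (s : ℝ)
    (σ : EuclideanSpace ℝ (Fin (m + 2)) ≃ᵃⁱ[ℝ] EuclideanSpace ℝ (Fin (m + 2)))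
    (φ : EuclideanSpace ℝ (Fin (m + 1)) → ℝ → ℝ) : Prop :=
  ∀ (x : EuclideanSpace ℝ (Fin (m + 2))) (t : ℝ),
    ‖headCoords (σ x)‖ < R₀ → |lastCoord (σ x)| < R₀ → |t - s| < R₀ ^ 2 →
    (x ∈ Ω t ↔ φ (headCoords (σ x)) (t - s) < lastCoord (σ x))

namespace IsGraphChart

variable {m : ℕ} {β R₀ Ebd s t : ℝ} {Ω : ℝ → Set (EuclideanSpace ℝ (Fin (m + 2)))}
  {σ : EuclideanSpace ℝ (Fin (m + 2)) ≃ᵃⁱ[ℝ] EuclideanSpace ℝ (Fin (m + 2))}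
  {φ : EuclideanSpace ℝ (Fin (m + 1)) → ℝ → ℝ} {y : EuclideanSpace ℝ (Fin (m + 1))}

theorem symm_mem_iff (hχ : IsGraphChart m R₀ Ω s σ φ) {c : ℝ} (hy : ‖y‖ < R₀) (hc : |c| < R₀)
    (ht : |t - s| < R₀ ^ 2) : σ.symm (ofHeadLast y c) ∈ Ω t ↔ φ y (t - s) < c := by
  simpa using hχ (σ.symm (ofHeadLast y c)) t (by simpa using hy) (by simpa using hc) ht

theorem symm_graph_mem_closure (hχ : IsGraphChart m R₀ Ω s σ φ) (hy : ‖y‖ < R₀)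
    (hc : |φ y 0| < R₀) : σ.symm (ofHeadLast y (φ y 0)) ∈ closure (Ω s) := by
  have hR : 0 < R₀ := (norm_nonneg y).trans_lt hy
  have hcont : Continuous fun c => σ.symm (ofHeadLast y c) :=
    σ.symm.continuous.comp (isometry_ofHeadLast y).continuous
  refine mem_closure_of_tendsto (b := 𝓝[>] (φ y 0))
    ((hcont.tendsto _).mono_left nhdsWithin_le_nhds) ?_
  filter_upwards [Ioo_mem_nhdsGT (abs_lt.1 hc).2] with c hc'
  have hmem := hχ.symm_mem_iff hy (abs_lt.2 ⟨by linarith [(abs_lt.1 hc).1, hc'.1], hc'.2⟩)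
    (t := s) (by simpa using pow_pos hR 2)
  rw [sub_self] at hmem
  exact hmem.2 hc'.1

theorem exists_mem_inter (hχ : IsGraphChart m R₀ Ω s σ φ) (hφ : GraphC2β m β R₀ Ebd φ)
    (hR : 0 < R₀) (hts : |t - s| < R₀ ^ 2) (hL : Ebd / R₀ * |t - s| < R₀ / 2) :
    (Ω t ∩ Ω s).Nonempty := by
  have h0 : ‖(0 : EuclideanSpace ℝ (Fin (m + 1)))‖ < R₀ := by simpa using hR
  have hc : |R₀ / 2| < R₀ := by rw [abs_of_pos (half_pos hR)]; exact half_lt_self hR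
  have hlip := hφ.abs_sub_le (mem_ball_self hR) ⟨neg_lt_zero.2 (pow_pos hR 2), pow_pos hR 2⟩
    (abs_lt.1 hts)
  rw [hφ.val0, sub_zero, sub_zero] at hlip
  refine ⟨σ.symm (ofHeadLast 0 (R₀ / 2)), (hχ.symm_mem_iff h0 hc hts).2 ?_, ?_⟩
  · linarith [le_abs_self (φ 0 (t - s))]
  · rw [hχ.symm_mem_iff h0 hc (by simpa using pow_pos hR 2), sub_self, hφ.val0]
    exact half_pos hR

/-- The barrier estimate: the vertical segment from `x` to the graph of `φ(·, 0)` stays in the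
chart and has length at most `(E/R₀)|t - s|`. -/
theorem infDist_closure_le (hχ : IsGraphChart m R₀ Ω s σ φ) (hφ : GraphC2β m β R₀ Ebd φ)
    {x z : EuclideanSpace ℝ (Fin (m + 2))} (hz : σ z = 0) (hx : x ∈ Ω t) (hxs : x ∉ Ω s)
    (hxz : dist x z < R₀ / 2) (hts : |t - s| < R₀ ^ 2) (hL : Ebd / R₀ * |t - s| ≤ R₀ / 2) :
    infDist x (closure (Ω s)) ≤ Ebd / R₀ * |t - s| := by
  set w := σ x
  have hw : ‖w‖ < R₀ / 2 := by rwa [← dist_zero_right, ← hz, σ.dist_map]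
  have hR : 0 < R₀ := by linarith [norm_nonneg w]
  have hhead : ‖headCoords w‖ < R₀ := by linarith [norm_headCoords_le w]
  have hlast := abs_lt.1 ((abs_lastCoord_le w).trans_lt hw)
  have hlast' : |lastCoord w| < R₀ := by rw [abs_lt]; constructor <;> linarith
  have hbelow : φ (headCoords w) (t - s) < lastCoord w := (hχ x t hhead hlast' hts).1 hx
  have habove : lastCoord w ≤ φ (headCoords w) 0 := by
    by_contra! h
    refine hxs ((hχ x s hhead hlast' (by simpa using pow_pos hR 2)).2 ?_)
    rwa [sub_self]
  have hlip := hφ.abs_sub_le (mem_ball_zero_iff.2 hhead) (abs_lt.1 hts)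
    ⟨neg_lt_zero.2 (pow_pos hR 2), pow_pos hR 2⟩
  rw [zero_sub, abs_neg] at hlip
  have hdrop := (le_abs_self _).trans hlip
  have hgraph := hχ.symm_graph_mem_closure hhead (abs_lt.2 ⟨by linarith, by linarith⟩)
  calc infDist x (closure (Ω s))
      ≤ dist x (σ.symm (ofHeadLast (headCoords w) (φ (headCoords w) 0))) :=
        infDist_le_dist_of_mem hgraph
    _ = φ (headCoords w) 0 - lastCoord w := by
        have hw_eq : σ x = ofHeadLast (headCoords w) (lastCoord w) :=
          (ofHeadLast_headCoords_lastCoord w).symm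
        rw [← σ.dist_map, σ.apply_symm_apply, hw_eq, (isometry_ofHeadLast _).dist_eq,
          Real.dist_eq, abs_sub_comm, abs_of_nonneg (sub_nonneg.2 habove)]
    _ ≤ Ebd / R₀ * |t - s| := by linarith

end IsGraphChart

section Family

variable {m : ℕ} {β R₀ Ebd : ℝ} {Ω : ℝ → Set (EuclideanSpace ℝ (Fin (m + 2)))} {s t : ℝ}

theorem infDist_closure_le_of_isPreconnected (hR : 0 < R₀) (hE : 0 ≤ Ebd)
    (hbd : Bornology.IsBounded (Ω s)) (hne : (Ω s).Nonempty) (hconn : IsPreconnected (Ω t))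
    (hcharts : ∀ z ∈ frontier (Ω s), ∃ σ : EuclideanSpace ℝ (Fin (m + 2)) ≃ᵃⁱ[ℝ]
      EuclideanSpace ℝ (Fin (m + 2)), ∃ φ : EuclideanSpace ℝ (Fin (m + 1)) → ℝ → ℝ,
        σ z = 0 ∧ GraphC2β m β R₀ Ebd φ ∧ IsGraphChart m R₀ Ω s σ φ)
    (hts : |t - s| < R₀ ^ 2) (hL : Ebd / R₀ * |t - s| < R₀ / 2) :
    ∀ x ∈ Ω t, infDist x (closure (Ω s)) ≤ Ebd / R₀ * |t - s| := by
  have hfrontier : (frontier (Ω s)).Nonempty :=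
    nonempty_frontier_iff.2 ⟨hne, fun h => NormedSpace.unbounded_univ ℝ _ (h ▸ hbd)⟩
  obtain ⟨z₀, hz₀⟩ := hfrontier
  obtain ⟨σ₀, φ₀, -, hφ₀, hχ₀⟩ := hcharts z₀ hz₀
  obtain ⟨x₀, hx₀t, hx₀s⟩ := hχ₀.exists_mem_inter hφ₀ hR hts hL
  have hgap : ∀ x ∈ Ω t, infDist x (closure (Ω s)) < R₀ / 2 →
      infDist x (closure (Ω s)) ≤ Ebd / R₀ * |t - s| := by
    intro x hx hnear
    by_cases hxs : x ∈ closure (Ω s)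
    · rw [infDist_zero_of_mem hxs]
      positivity
    obtain ⟨z, hz, hdist⟩ := exists_mem_frontier_infDist_closure_eq_dist hne hxs
    obtain ⟨σ, φ, hσz, hφ, hχ⟩ := hcharts z hz
    exact hχ.infDist_closure_le hφ hσz hx (fun h => hxs (subset_closure h)) (hdist ▸ hnear)
      hts hL.le
  refine hconn.forall_le_of_forall_lt_imp_le (continuous_infDist_pt _).continuousOn hL hgap
    hx₀t ?_
  rw [infDist_zero_of_mem (subset_closure hx₀s)]
  positivity

theorem hausdorffDist_closure_le {I : Set ℝ} (hR : 0 < R₀) (hE : 0 ≤ Ebd)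
    (hbd : ∀ r, Bornology.IsBounded (Ω r)) (hconn : ∀ r, IsConnected (Ω r))
    (hbc : BoundaryC2β m β R₀ Ebd Ω {p | p.2 ∈ I ∧ p.1 ∈ frontier (Ω p.2)})
    (ht : t ∈ I) (hs : s ∈ I) (hts : |t - s| ≤ R₀ ^ 2 / (2 * (1 + Ebd))) :
    hausdorffDist (closure (Ω t)) (closure (Ω s)) ≤ Ebd / R₀ * |t - s| := by
  have hsq : |t - s| < R₀ ^ 2 := hts.trans_lt <| by
    rw [div_lt_iff₀ (by positivity)]; nlinarith [pow_pos hR 2]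
  have hL : Ebd / R₀ * |t - s| < R₀ / 2 := calc
    Ebd / R₀ * |t - s| ≤ Ebd / R₀ * (R₀ ^ 2 / (2 * (1 + Ebd))) := by gcongr
    _ < R₀ / 2 := by
      rw [div_mul_div_comm, div_lt_div_iff₀ (by positivity) two_pos]
      nlinarith [pow_pos hR 2]
  have hclosure {t s : ℝ} (ht : t ∈ I) (hs : s ∈ I) (hts : |t - s| < R₀ ^ 2)
      (hL : Ebd / R₀ * |t - s| < R₀ / 2) :
      ∀ x ∈ closure (Ω t), infDist x (closure (Ω s)) ≤ Ebd / R₀ * |t - s| :=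
    closure_minimal (infDist_closure_le_of_isPreconnected hR hE (hbd s) (hconn s).nonempty
        (hconn t).isPreconnected (fun z hz => hbc (z, s) ⟨hs, hz⟩) hts hL)
      (isClosed_le (continuous_infDist_pt _) continuous_const)
  refine hausdorffDist_le_of_infDist (by positivity) (hclosure ht hs hsq hL) ?_
  rw [abs_sub_comm] at hsq hL ⊢
  exact hclosure hs ht hsq hL

end Family

theorem stmt_18_general (m : ℕ) (β : ℝ) (Ebd M : ℝ)
    (hEbd : 0 < Ebd) :
    ∃ C : ℝ, 0 < C ∧
    ∀ (R₀ T : ℝ) (Ω₁ Ω₂ : ℝ → Set (EuclideanSpace ℝ (Fin (m + 2)))),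
      0 < R₀ → 0 < T →
      (∀ t, IsOpen (Ω₁ t) ∧ IsOpen (Ω₂ t)) →
      (∀ t, Bornology.IsBounded (Ω₁ t) ∧ Bornology.IsBounded (Ω₂ t)) →
      (∀ t, IsConnected (Ω₁ t) ∧ IsConnected (Ω₂ t)) →
      (∀ t ∈ Set.Icc (0 : ℝ) T,
        volume (Ω₁ t) ≤ ENNReal.ofReal (M * R₀ ^ (m + 2)) ∧
        volume (Ω₂ t) ≤ ENNReal.ofReal (M * R₀ ^ (m + 2))) →
      BoundaryC2β m β R₀ Ebd Ω₁
        {p | p.2 ∈ Set.Icc (0 : ℝ) T ∧ p.1 ∈ frontier (Ω₁ p.2)} →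
      BoundaryC2β m β R₀ Ebd Ω₂
        {p | p.2 ∈ Set.Icc (0 : ℝ) T ∧ p.1 ∈ frontier (Ω₂ p.2)} →
      ∀ t ∈ Set.Icc (0 : ℝ) T, ∀ τ ∈ Set.Icc (0 : ℝ) T,
        |Metric.hausdorffDist (closure (Ω₁ t)) (closure (Ω₂ t)) -
            Metric.hausdorffDist (closure (Ω₁ τ)) (closure (Ω₂ τ))| ≤
          C * |t - τ| / R₀ := by
  refine ⟨2 * Ebd, by positivity, fun R₀ T Ω₁ Ω₂ hR _ _ hbd hconn _ hbc₁ hbc₂ => ?_⟩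
  have hlocal : ∀ a ∈ Icc (0 : ℝ) T, ∀ b ∈ Icc (0 : ℝ) T, |b - a| ≤ R₀ ^ 2 / (2 * (1 + Ebd)) →
      |hausdorffDist (closure (Ω₁ b)) (closure (Ω₂ b)) -
        hausdorffDist (closure (Ω₁ a)) (closure (Ω₂ a))| ≤ 2 * Ebd / R₀ * |b - a| := by
    intro a ha b hb hab
    have h₁ := hausdorffDist_closure_le hR hEbd.le (fun r => (hbd r).1) (fun r => (hconn r).1)
      hbc₁ hb ha hab
    have h₂ := hausdorffDist_closure_le hR hEbd.le (fun r => (hbd r).2) (fun r => (hconn r).2)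
      hbc₂ hb ha hab
    have hdiff := abs_hausdorffDist_sub_hausdorffDist_le (hconn b).1.nonempty.closure
      (hconn a).1.nonempty.closure (hconn b).2.nonempty.closure (hconn a).2.nonempty.closure
      (hbd b).1.closure (hbd a).1.closure (hbd b).2.closure (hbd a).2.closure
    exact (hdiff.trans (add_le_add h₁ h₂)).trans_eq (by ring)
  intro t ht τ hτ
  calc _ ≤ 2 * Ebd / R₀ * |t - τ| :=
        ordConnected_Icc.abs_sub_le_mul_of_local (by positivity) hlocal τ hτ t ht
    _ = 2 * Ebd * |t - τ| / R₀ := by ring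

/-- If `{Ω₁(t)}` and `{Ω₂(t)}` are two families of bounded domains
in `ℝⁿ` satisfying `|Ω_i(t)| ≤ M R₀ⁿ` on `[0,T]` whose lateral boundaries over `[0,T]`
are of class `C^{2,β}` with constants `R₀`, `E`, then the map
`t ↦ d_H(cl Ω₁(t), cl Ω₂(t))` is Lipschitz:
`|d_H(t) − d_H(τ)| ≤ C |t−τ|/R₀` with `C` depending only on `E`, `M`, `β`. -/
theorem stmt_18 (m : ℕ) (β : ℝ) (hβ : β ∈ Set.Ioo (0 : ℝ) 1) (Ebd M : ℝ)
    (hEbd : 0 < Ebd) (hM : 0 < M) :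
    ∃ C : ℝ, 0 < C ∧
    ∀ (R₀ T : ℝ) (Ω₁ Ω₂ : ℝ → Set (EuclideanSpace ℝ (Fin (m + 2)))),
      0 < R₀ → 0 < T →
      (∀ t, IsOpen (Ω₁ t) ∧ IsOpen (Ω₂ t)) →
      (∀ t, Bornology.IsBounded (Ω₁ t) ∧ Bornology.IsBounded (Ω₂ t)) →
      (∀ t, IsConnected (Ω₁ t) ∧ IsConnected (Ω₂ t)) →
      (∀ t ∈ Set.Icc (0 : ℝ) T,
        volume (Ω₁ t) ≤ ENNReal.ofReal (M * R₀ ^ (m + 2)) ∧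
        volume (Ω₂ t) ≤ ENNReal.ofReal (M * R₀ ^ (m + 2))) →
      BoundaryC2β m β R₀ Ebd Ω₁
        {p | p.2 ∈ Set.Icc (0 : ℝ) T ∧ p.1 ∈ frontier (Ω₁ p.2)} →
      BoundaryC2β m β R₀ Ebd Ω₂
        {p | p.2 ∈ Set.Icc (0 : ℝ) T ∧ p.1 ∈ frontier (Ω₂ p.2)} →
      ∀ t ∈ Set.Icc (0 : ℝ) T, ∀ τ ∈ Set.Icc (0 : ℝ) T,
        |Metric.hausdorffDist (closure (Ω₁ t)) (closure (Ω₂ t)) -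
            Metric.hausdorffDist (closure (Ω₁ τ)) (closure (Ω₂ τ))| ≤
          C * |t - τ| / R₀ :=
  stmt_18_general m β Ebd M hEbd
end
end
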